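/- arXiv:2101.03402 — 11 statements merged into one kernel-verified Lean document; each statement's English description precedes it below -/
import Mathlib

section
/- Let (a_n)_{n≥1} be a sequence of positive real numbers. The series ∑ a_n diverges if and only if there exist a sequence (q_n)_{n≥1} of positive real numbers and an integer N ≥ 1 such that the series ∑ 1/q_n diverges and q_n · (a_n / a_{n+1}) − q_{n+1} ≤ 0 for all n ≥ N. -/
/-! If `q n * (a n / a (n + 1)) ≤ q (n + 1)` from `N` on, then `q n * a n` is nondecreasing from `N`
on, so `1 / q n ≤ a n / (q N * a N)` and summability of `a` would force that of `1 / q`.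
Conversely, `q = 1 / a` makes the Kummer quantity vanish identically. -/

open Filter

theorem mul_le_mul_succ_of_kummer_nonpos {a q : ℕ → ℝ} {n : ℕ} (ha : 0 < a (n + 1))
    (h : q n * (a n / a (n + 1)) - q (n + 1) ≤ 0) : q n * a n ≤ q (n + 1) * a (n + 1) :=
  calc q n * a n = q n * (a n / a (n + 1)) * a (n + 1) := by field_simp
    _ ≤ q (n + 1) * a (n + 1) := mul_le_mul_of_nonneg_right (sub_nonpos.mp h) ha.le

theorem monotoneOn_mul_of_kummer_nonpos {a q : ℕ → ℝ} {N : ℕ} (ha : ∀ n, N ≤ n → 0 < a (n + 1))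
    (h : ∀ n, N ≤ n → q n * (a n / a (n + 1)) - q (n + 1) ≤ 0) :
    MonotoneOn (fun n => q n * a n) (Set.Ici N) :=
  monotoneOn_nat_Ici_of_le_succ fun n hn => mul_le_mul_succ_of_kummer_nonpos (ha n hn) (h n hn)

theorem Summable.one_div_of_le_mul {a q : ℕ → ℝ} {c : ℝ} (hsum : Summable a) (hc : 0 < c)
    (h : ∀ᶠ n in atTop, 0 < q n ∧ c ≤ q n * a n) : Summable fun n => 1 / q n := by
  refine (hsum.div_const c).of_norm_bounded_eventually_nat ?_
  filter_upwards [h] with n ⟨hq, hle⟩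
  rw [Real.norm_of_nonneg (one_div_pos.mpr hq).le, div_le_div_iff₀ hq hc]
  linarith

/-- Kummer's test, divergence part. -/
theorem kummer_divergence (a : ℕ → ℝ) (ha : ∀ n, 1 ≤ n → 0 < a n) :
    ¬ Summable (fun n : ℕ => a (n + 1)) ↔
      ∃ (q : ℕ → ℝ) (N : ℕ), (∀ n, 1 ≤ n → 0 < q n) ∧ 1 ≤ N ∧
        ¬ Summable (fun n : ℕ => 1 / q (n + 1)) ∧
        ∀ n, N ≤ n → q n * (a n / a (n + 1)) - q (n + 1) ≤ 0 := by
  constructor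
  · intro hdiv
    refine ⟨fun n => 1 / a n, 1, fun n hn => one_div_pos.mpr (ha n hn), le_rfl, ?_, ?_⟩
    · simpa only [one_div_one_div] using hdiv
    · intro n hn
      dsimp only
      rw [one_div_mul_eq_div, div_div_cancel_left' (ha n hn).ne', one_div, sub_self]
  · rintro ⟨q, N, hq, hN, hdiv, hkummer⟩ hsum
    have hmono := monotoneOn_mul_of_kummer_nonpos (fun n _ => ha (n + 1) (by omega)) hkummer
    have hbound : ∀ᶠ n in atTop, 0 < q n ∧ q N * a N ≤ q n * a n :=
      eventually_atTop.mpr ⟨N, fun n hn =>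
        ⟨hq n (by omega), hmono Set.self_mem_Ici (Set.mem_Ici.mpr hn) hn⟩⟩
    rw [summable_nat_add_iff 1] at hsum
    rw [summable_nat_add_iff (f := fun n => 1 / q n) 1] at hdiv
    exact hdiv (hsum.one_div_of_le_mul (mul_pos (hq N hN) (ha N hN)) hbound)
end

section
/- Let (a_n)_{n≥1} be a sequence of positive real numbers and let m ≥ 1 be a fixed positive integer. If there exist a sequence (q_n)_{n≥1} of positive real numbers, a real number c > 0, and an integer N such that q_n · (a_n / a_{n+m}) − q_{n+m} ≥ c for all n ≥ N, then the series ∑ a_n converges. -/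
/-!
Put `b n = q n * a n`. The hypothesis says `c * a (n + m) ≤ b n - b (n + m)`, and the sums of
`b n - b (n + m)` telescope in blocks of length `m`: their partial sums are bounded by the sum of
the first `m` values of `b ≥ 0`. So the partial sums of `a` are bounded.
-/

open Finset

theorem Finset.sum_range_sub_shift (b : ℕ → ℝ) (m n : ℕ) :
    ∑ i ∈ range n, (b i - b (i + m)) = ∑ i ∈ range m, b i - ∑ i ∈ range m, b (n + i) := by
  have h : ∑ i ∈ range n, b i + ∑ i ∈ range m, b (n + i)
      = ∑ i ∈ range m, b i + ∑ i ∈ range n, b (m + i) := by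
    rw [← sum_range_add, ← sum_range_add, add_comm]
  simp only [sum_sub_distrib, add_comm _ m]
  linarith

theorem summable_of_le_sub_shift {u b : ℕ → ℝ} (m : ℕ) (hu : ∀ n, 0 ≤ u n) (hb : ∀ n, 0 ≤ b n)
    (h : ∀ n, u n ≤ b n - b (n + m)) : Summable u := by
  refine summable_of_sum_range_le (c := ∑ i ∈ range m, b i) hu fun n => ?_
  calc ∑ i ∈ range n, u i ≤ ∑ i ∈ range n, (b i - b (i + m)) := sum_le_sum fun i _ => h i
    _ = ∑ i ∈ range m, b i - ∑ i ∈ range m, b (n + i) := sum_range_sub_shift b m n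
    _ ≤ ∑ i ∈ range m, b i := sub_le_self _ (sum_nonneg fun i _ => hb _)

theorem mul_le_sub_of_le_mul_div_sub {x y p p' c : ℝ} (hy : 0 < y) (h : c ≤ p * (x / y) - p') :
    c * y ≤ p * x - p' * y :=
  calc c * y ≤ (p * (x / y) - p') * y := mul_le_mul_of_nonneg_right h hy.le
    _ = p * x - p' * y := by field_simp

theorem summable_of_kummer_step {a q : ℕ → ℝ} {m : ℕ} {c : ℝ} (hc : 0 < c) (ha : ∀ n, 0 < a n)
    (hq : ∀ n, 0 ≤ q n) (h : ∀ n, c ≤ q n * (a n / a (n + m)) - q (n + m)) : Summable a := by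
  have hshift : Summable fun n => c * a (n + m) :=
    summable_of_le_sub_shift (b := fun n => q n * a n) m (fun n => (mul_pos hc (ha _)).le)
      (fun n => mul_nonneg (hq n) (ha n).le) fun n => mul_le_sub_of_le_mul_div_sub (ha _) (h n)
  exact (summable_nat_add_iff m).1 ((summable_mul_left_iff hc.ne').1 hshift)

theorem kummer_step_convergence_general (a : ℕ → ℝ) (ha : ∀ n, 1 ≤ n → 0 < a n)
    (m : ℕ) (q : ℕ → ℝ) (hq : ∀ n, 1 ≤ n → 0 < q n)
    (c : ℝ) (hc : 0 < c) (N : ℕ)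
    (h : ∀ n, N ≤ n → q n * (a n / a (n + m)) - q (n + m) ≥ c) :
    Summable (fun n : ℕ => a (n + 1)) := by
  have htail : Summable fun n => a (n + N + 1) := by
    refine summable_of_kummer_step (q := fun n => q (n + N + 1)) (m := m) hc
      (fun n => ha _ (by omega)) (fun n => (hq _ (by omega)).le) fun n => ?_
    simpa only [add_right_comm _ m] using h (n + N + 1) (by omega)
  exact (summable_nat_add_iff N).1 htail

/-- Extended Kummer convergence test with step `m`. -/
theorem kummer_step_convergence (a : ℕ → ℝ) (ha : ∀ n, 1 ≤ n → 0 < a n)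
    (m : ℕ) (hm : 1 ≤ m) (q : ℕ → ℝ) (hq : ∀ n, 1 ≤ n → 0 < q n)
    (c : ℝ) (hc : 0 < c) (N : ℕ)
    (h : ∀ n, N ≤ n → q n * (a n / a (n + m)) - q (n + m) ≥ c) :
    Summable (fun n : ℕ => a (n + 1)) :=
  kummer_step_convergence_general a ha m q hq c hc N h
end

section
/- Let (a_n)_{n≥1} be a sequence of positive real numbers whose series ∑ a_n diverges, and let m ≥ 1 be a fixed positive integer. Then there exists a sequence (q_n)_{n≥1} of positive real numbers, namely q_n = (a_1 + ⋯ + a_n)/a_n, such that the series ∑ 1/q_n diverges, q_n · a_n ≥ a_1 > 0 for all n ≥ 1, and q_n · (a_n / a_{n+m}) − q_{n+m} ≤ 0 for all n ≥ 1. -/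
/-!
With `S n = a 1 + ⋯ + a n`, the inequalities are immediate from the monotonicity of `S`:
`q n * a n = S n ≥ a 1` and `q n * (a n / a (n + m)) = S n / a (n + m) ≤ S (n + m) / a (n + m)`.
The divergence of `∑ 1 / q n = ∑ a n / S n` is the Abel–Dini theorem: a block of terms from
`N` to `n` has sum at least `(S n - S N) / S n`, which tends to `1` as `n → ∞`, so the tails of
the series cannot tend to `0`.
-/

open Finset Filter Topology

section AbelDini

variable {f : ℕ → ℝ}

lemma one_sub_div_le_sum_Ico_div_partialSum (hf : ∀ n, 0 ≤ f n) {N n : ℕ}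
    (hN : 0 < ∑ i ∈ range N, f i) (hNn : N ≤ n) :
    1 - (∑ i ∈ range N, f i) / ∑ i ∈ range n, f i ≤
      ∑ k ∈ Ico N n, f k / ∑ i ∈ range (k + 1), f i := by
  have hmono : Monotone fun n => ∑ i ∈ range n, f i :=
    (sum_mono_set_of_nonneg hf).comp range_mono
  have hn : 0 < ∑ i ∈ range n, f i := hN.trans_le (hmono hNn)
  calc 1 - (∑ i ∈ range N, f i) / ∑ i ∈ range n, f i
      = (∑ k ∈ Ico N n, f k) / ∑ i ∈ range n, f i := by
        rw [sum_Ico_eq_sub _ hNn, sub_div, div_self hn.ne']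
    _ = ∑ k ∈ Ico N n, f k / ∑ i ∈ range n, f i := sum_div _ _ _
    _ ≤ ∑ k ∈ Ico N n, f k / ∑ i ∈ range (k + 1), f i := by
        refine sum_le_sum fun k hk => ?_
        obtain ⟨hNk, hkn⟩ := mem_Ico.mp hk
        exact div_le_div_of_nonneg_left (hf k) (hN.trans_le (hmono (by omega))) (hmono hkn)

/-- The Abel–Dini theorem. -/
theorem not_summable_div_partialSum (hf : ∀ n, 0 ≤ f n) (hdiv : ¬ Summable f) :
    ¬ Summable fun n => f n / ∑ i ∈ range (n + 1), f i := by
  intro hsum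
  set g := fun n => f n / ∑ i ∈ range (n + 1), f i
  have hT : Tendsto (fun n => ∑ i ∈ range n, f i) atTop atTop :=
    (not_summable_iff_tendsto_nat_atTop_of_nonneg hf).mp hdiv
  have hG : Tendsto (fun n => ∑ k ∈ range n, g k) atTop (𝓝 (∑' k, g k)) :=
    hsum.hasSum.tendsto_sum_nat
  have htail_ge : ∀ᶠ N in atTop, 1 ≤ ∑' k, g k - ∑ k ∈ range N, g k := by
    filter_upwards [hT.eventually_gt_atTop 0] with N hN
    have hratio :
        Tendsto (fun n => 1 - (∑ i ∈ range N, f i) / ∑ i ∈ range n, f i) atTop (𝓝 1) := by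
      simpa using tendsto_const_nhds.sub (tendsto_const_nhds.div_atTop hT)
    refine le_of_tendsto_of_tendsto hratio (hG.sub_const _) ?_
    filter_upwards [eventually_ge_atTop N] with n hNn
    rw [← sum_Ico_eq_sub _ hNn]
    exact one_sub_div_le_sum_Ico_div_partialSum hf hN hNn
  have htail_lim : Tendsto (fun N => ∑' k, g k - ∑ k ∈ range N, g k) atTop (𝓝 0) := by
    simpa using (tendsto_const_nhds (x := ∑' k, g k)).sub hG
  linarith [ge_of_tendsto htail_lim htail_ge]

end AbelDini

lemma sum_Icc_one_eq_sum_range {M : Type*} [AddCommMonoid M] (a : ℕ → M) (n : ℕ) :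
    ∑ i ∈ Icc 1 n, a i = ∑ i ∈ range n, a (i + 1) := by
  rw [← Ico_add_one_right_eq_Icc, sum_Ico_eq_sum_range]
  simp [add_comm]

theorem kummer_step_divergence_converse_general (a : ℕ → ℝ) (ha : ∀ n, 1 ≤ n → 0 < a n)
    (m : ℕ) (hdiv : ¬ Summable (fun n : ℕ => a (n + 1))) :
    ∃ q : ℕ → ℝ, q = (fun n : ℕ => (∑ i ∈ Finset.Icc 1 n, a i) / a n) ∧
      (∀ n, 1 ≤ n → 0 < q n) ∧
      ¬ Summable (fun n : ℕ => 1 / q (n + 1)) ∧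
      (∀ n, 1 ≤ n → q n * a n ≥ a 1) ∧ 0 < a 1 ∧
      (∀ n, 1 ≤ n → q n * (a n / a (n + m)) - q (n + m) ≤ 0) := by
  have ha' : ∀ n, 0 ≤ a (n + 1) := fun n => (ha (n + 1) (Nat.le_add_left 1 n)).le
  have hS_mono : Monotone fun n => ∑ i ∈ Icc 1 n, a i := by
    simp only [sum_Icc_one_eq_sum_range]
    exact (sum_mono_set_of_nonneg ha').comp range_mono
  have ha1_le : ∀ n, 1 ≤ n → a 1 ≤ ∑ i ∈ Icc 1 n, a i := fun n hn => by
    simpa using hS_mono hn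
  refine ⟨_, rfl, fun n hn => div_pos ((ha 1 le_rfl).trans_le (ha1_le n hn)) (ha n hn),
    ?_, fun n hn => ?_, ha 1 le_rfl, fun n hn => ?_⟩
  · simpa only [one_div_div, sum_Icc_one_eq_sum_range] using not_summable_div_partialSum ha' hdiv
  · rw [div_mul_cancel₀ _ (ha n hn).ne']
    exact ha1_le n hn
  · rw [div_mul_div_cancel₀ (ha n hn).ne', sub_nonpos]
    exact div_le_div_of_nonneg_right (hS_mono (n.le_add_right m)) (ha _ (by omega)).le

/-- Converse of the extended Kummer divergence test with step `m`:
one may take `q n = (a 1 + ⋯ + a n) / a n`. -/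
theorem kummer_step_divergence_converse (a : ℕ → ℝ) (ha : ∀ n, 1 ≤ n → 0 < a n)
    (m : ℕ) (hm : 1 ≤ m) (hdiv : ¬ Summable (fun n : ℕ => a (n + 1))) :
    ∃ q : ℕ → ℝ, q = (fun n : ℕ => (∑ i ∈ Finset.Icc 1 n, a i) / a n) ∧
      (∀ n, 1 ≤ n → 0 < q n) ∧
      ¬ Summable (fun n : ℕ => 1 / q (n + 1)) ∧
      (∀ n, 1 ≤ n → q n * a n ≥ a 1) ∧ 0 < a 1 ∧
      (∀ n, 1 ≤ n → q n * (a n / a (n + m)) - q (n + m) ≤ 0) :=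
  kummer_step_divergence_converse_general a ha m hdiv
end

section
/- Let (a_n)_{n≥1} and (c_n)_{n≥1} be sequences of positive real numbers. The series ∑ c_n a_n converges if and only if there exist a sequence (q_n)_{n≥1} of positive real numbers and a positive integer N ≥ 1 such that q_n · (a_n / a_{n+1}) − q_{n+1} ≥ c_{n+1} for all n ≥ N. -/
/-!
Put `f n = c (n + 1) * a (n + 1)` and `b n = q n * a n`; multiplying the Kummer condition by
`a (n + 1) > 0` turns it into `f n ≤ b n - b (n + 1)`. Such a positive `b` forces the partial sums of
`f` to telescope below `b N`, so `∑ f` converges; conversely, when `∑ f` converges its tail sums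
`b n = ∑_{k ≥ n} f k` are positive and satisfy `b n - b (n + 1) = f n`, so `q n = b n / a n` works.
-/

open Finset

theorem le_mul_div_sub_iff {q q' x x' c : ℝ} (hx' : 0 < x') :
    c ≤ q * (x / x') - q' ↔ c * x' ≤ q * x - q' * x' := by
  rw [← mul_le_mul_iff_of_pos_right hx', sub_mul, mul_assoc, div_mul_cancel₀ x hx'.ne']

theorem Summable.tsum_nat_add_sub_tsum_nat_add_succ {f : ℕ → ℝ} (hf : Summable f) (n : ℕ) :
    ∑' i, f (i + n) - ∑' i, f (i + (n + 1)) = f n := by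
  have h := hf.sum_add_tsum_nat_add n
  have h' := hf.sum_add_tsum_nat_add (n + 1)
  rw [sum_range_succ] at h'
  linarith

theorem Summable.exists_pos_sub_succ_eq {f : ℕ → ℝ} (hf : Summable f) (hpos : ∀ n, 0 < f n) :
    ∃ b : ℕ → ℝ, (∀ n, 0 < b n) ∧ ∀ n, b n - b (n + 1) = f n :=
  ⟨fun n => ∑' i, f (i + n),
    fun n => ((summable_nat_add_iff n).2 hf).tsum_pos (fun _ => (hpos _).le) 0 (hpos _),
    hf.tsum_nat_add_sub_tsum_nat_add_succ⟩

theorem summable_of_le_sub_succ {f b : ℕ → ℝ} (hf : ∀ n, 0 ≤ f n) (hb : ∀ n, 0 ≤ b n)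
    (hfb : ∀ n, f n ≤ b n - b (n + 1)) : Summable f :=
  summable_of_sum_range_le hf fun m =>
    calc ∑ i ∈ range m, f i ≤ ∑ i ∈ range m, (b i - b (i + 1)) := sum_le_sum fun i _ => hfb i
      _ = b 0 - b m := sum_range_sub' b m
      _ ≤ b 0 := sub_le_self _ (hb m)

theorem summable_of_le_sub_succ_of_le {f b : ℕ → ℝ} {N : ℕ} (hf : ∀ n, N ≤ n → 0 ≤ f n)
    (hb : ∀ n, N ≤ n → 0 ≤ b n) (hfb : ∀ n, N ≤ n → f n ≤ b n - b (n + 1)) : Summable f :=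
  (summable_nat_add_iff N).1 <|
    summable_of_le_sub_succ (b := fun n => b (n + N)) (fun n => hf _ (Nat.le_add_left N n))
      (fun n => hb _ (Nat.le_add_left N n))
      (fun n => by simpa only [add_right_comm] using hfb _ (Nat.le_add_left N n))

/-- Extended Kummer convergence test for series of the form `∑ c_n a_n`. -/
theorem kummer_mul_convergence (a c : ℕ → ℝ) (ha : ∀ n, 1 ≤ n → 0 < a n)
    (hc : ∀ n, 1 ≤ n → 0 < c n) :
    Summable (fun n : ℕ => c (n + 1) * a (n + 1)) ↔
      ∃ (q : ℕ → ℝ) (N : ℕ), (∀ n, 1 ≤ n → 0 < q n) ∧ 1 ≤ N ∧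
        ∀ n, N ≤ n → q n * (a n / a (n + 1)) - q (n + 1) ≥ c (n + 1) := by
  have ha' (n : ℕ) : 0 < a (n + 1) := ha _ (Nat.le_add_left 1 n)
  have hf (n : ℕ) : 0 < c (n + 1) * a (n + 1) := mul_pos (hc _ (Nat.le_add_left 1 n)) (ha' n)
  constructor
  · intro hs
    obtain ⟨b, hb, hbf⟩ := hs.exists_pos_sub_succ_eq hf
    refine ⟨fun n => b n / a n, 1, fun n hn => div_pos (hb n) (ha n hn), le_rfl, fun n hn => ?_⟩
    rw [ge_iff_le, le_mul_div_sub_iff (ha' n), div_mul_cancel₀ _ (ha n hn).ne',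
      div_mul_cancel₀ _ (ha' n).ne', hbf]
  · rintro ⟨q, N, hq, hN, hqc⟩
    have hN' {n : ℕ} (hn : N ≤ n) : 1 ≤ n := hN.trans hn
    exact summable_of_le_sub_succ_of_le (b := fun n => q n * a n) (fun n _ => (hf n).le)
      (fun n hn => (mul_pos (hq n (hN' hn)) (ha n (hN' hn))).le)
      (fun n hn => (le_mul_div_sub_iff (ha' n)).1 (hqc n hn))
end

section
/- Let (a_n)_{n≥1} and (c_n)_{n≥1} be sequences of positive real numbers. Suppose there exist a sequence (q_n)_{n≥1} of positive real numbers and a positive integer N such that q_n · (a_n / a_{n+1}) − q_{n+1} ≤ −c_{n+1} for all n ≥ N, and the series ∑ 1/q_n diverges. Then each of the series ∑ a_n, ∑ 1/c_n, ∑ (q_n − c_n) a_n, and ∑ q_n a_n diverges. -/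
/-!
Multiplied by `a (n + 1)`, the hypothesis reads `q n * a n ≤ (q (n + 1) - c (n + 1)) * a (n + 1)`
for `n ≥ N`. Hence `q n * a n` is eventually nondecreasing, so bounded below by some `K > 0`.
This gives `a n ≥ K / q n`, so `∑ a n` diverges with `∑ 1 / q n`; the terms `q n * a n` and
`(q n - c n) * a n` stay above `K`, so their series diverge; and the same inequality forces
`c n < q n`, so `∑ 1 / c n` diverges too.
-/

open Filter

theorem not_summable_of_eventually_le {f g : ℕ → ℝ} (hf : ¬ Summable f)
    (hf₀ : ∀ᶠ n in atTop, 0 ≤ f n) (hfg : ∀ᶠ n in atTop, f n ≤ g n) : ¬ Summable g :=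
  fun hg => hf <| hg.of_norm_bounded_eventually_nat <| by
    filter_upwards [hf₀, hfg] with n hn₀ hn
    rwa [Real.norm_of_nonneg hn₀]

theorem not_summable_of_eventually_const_le {f : ℕ → ℝ} {K : ℝ} (hK : 0 < K)
    (h : ∀ᶠ n in atTop, K ≤ f n) : ¬ Summable f := fun hf =>
  have ⟨_, hsmall, hlarge⟩ := ((hf.tendsto_atTop_zero.eventually (gt_mem_nhds hK)).and h).exists
  hsmall.not_ge hlarge

section Kummer

variable {a c q : ℕ → ℝ}

theorem kummer_step {n : ℕ} (ha : 0 < a (n + 1))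
    (h : q n * (a n / a (n + 1)) - q (n + 1) ≤ -c (n + 1)) :
    q n * a n ≤ (q (n + 1) - c (n + 1)) * a (n + 1) := by
  rw [← div_le_iff₀ ha, mul_div_assoc]
  linarith

theorem kummer_monotoneOn {N : ℕ} (ha : ∀ n, N ≤ n → 0 < a (n + 1))
    (hc : ∀ n, N ≤ n → 0 ≤ c (n + 1))
    (h : ∀ n, N ≤ n → q n * (a n / a (n + 1)) - q (n + 1) ≤ -c (n + 1)) :
    MonotoneOn (fun n => q n * a n) (Set.Ici N) :=
  monotoneOn_nat_Ici_of_le_succ fun n hn => by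
    nlinarith [kummer_step (ha n hn) (h n hn), hc n hn, ha n hn]

end Kummer

theorem kummer_mul_divergence_aux_general (a c : ℕ → ℝ) (ha : ∀ n, 1 ≤ n → 0 < a n)
    (hc : ∀ n, 1 ≤ n → 0 < c n) (q : ℕ → ℝ) (hq : ∀ n, 1 ≤ n → 0 < q n)
    (N : ℕ)
    (h : ∀ n, N ≤ n → q n * (a n / a (n + 1)) - q (n + 1) ≤ -c (n + 1))
    (hqdiv : ¬ Summable (fun n : ℕ => 1 / q (n + 1))) :
    ¬ Summable (fun n : ℕ => a (n + 1)) ∧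
      ¬ Summable (fun n : ℕ => 1 / c (n + 1)) ∧
      ¬ Summable (fun n : ℕ => (q (n + 1) - c (n + 1)) * a (n + 1)) ∧
      ¬ Summable (fun n : ℕ => q (n + 1) * a (n + 1)) := by
  have ha₁ (n : ℕ) : 0 < a (n + 1) := ha _ (Nat.le_add_left 1 n)
  have hc₁ (n : ℕ) : 0 < c (n + 1) := hc _ (Nat.le_add_left 1 n)
  have hq₁ (n : ℕ) : 0 < q (n + 1) := hq _ (Nat.le_add_left 1 n)
  have hqa (n : ℕ) (hn : 1 ≤ n) : 0 < q n * a n := mul_pos (hq n hn) (ha n hn)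
  have hstep (n : ℕ) (hn : N ≤ n) := kummer_step (ha₁ n) (h n hn)
  set K := q (N + 1) * a (N + 1)
  have hK₀ : 0 < K := hqa _ (Nat.le_add_left 1 N)
  have hK (n : ℕ) (hn : N + 1 ≤ n) : K ≤ q n * a n :=
    kummer_monotoneOn (fun n _ => ha₁ n) (fun n _ => (hc₁ n).le) h
      (Set.mem_Ici.2 (Nat.le_succ N)) (Set.mem_Ici.2 (by omega)) hn
  refine ⟨?_, ?_, ?_, ?_⟩
  · refine not_summable_of_eventually_le ((summable_mul_left_iff hK₀.ne').not.2 hqdiv)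
      (.of_forall fun n => (mul_pos hK₀ (one_div_pos.2 (hq₁ n))).le) ?_
    filter_upwards [eventually_ge_atTop N] with n hn
    rw [mul_one_div, div_le_iff₀ (hq₁ n), mul_comm (a _)]
    exact hK (n + 1) (by omega)
  · refine not_summable_of_eventually_le hqdiv (.of_forall fun n => (one_div_pos.2 (hq₁ n)).le) ?_
    filter_upwards [eventually_ge_atTop (N + 1)] with n hn
    have hcq : c (n + 1) < q (n + 1) :=
      sub_pos.1 (pos_of_mul_pos_left ((hqa n (by omega)).trans_le (hstep n (by omega))) (ha₁ n).le)
    exact one_div_le_one_div_of_le (hc₁ n) hcq.le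
  · exact not_summable_of_eventually_const_le hK₀ <| eventually_atTop.2
      ⟨N + 1, fun n hn => (hK n hn).trans (hstep n (by omega))⟩
  · exact not_summable_of_eventually_const_le hK₀ <| eventually_atTop.2
      ⟨N, fun n hn => hK (n + 1) (by omega)⟩

/-- Extended Kummer divergence test for series `∑ c_n a_n`: divergence of the four
auxiliary series. -/
theorem kummer_mul_divergence_aux (a c : ℕ → ℝ) (ha : ∀ n, 1 ≤ n → 0 < a n)
    (hc : ∀ n, 1 ≤ n → 0 < c n) (q : ℕ → ℝ) (hq : ∀ n, 1 ≤ n → 0 < q n)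
    (N : ℕ) (hN : 1 ≤ N)
    (h : ∀ n, N ≤ n → q n * (a n / a (n + 1)) - q (n + 1) ≤ -c (n + 1))
    (hqdiv : ¬ Summable (fun n : ℕ => 1 / q (n + 1))) :
    ¬ Summable (fun n : ℕ => a (n + 1)) ∧
      ¬ Summable (fun n : ℕ => 1 / c (n + 1)) ∧
      ¬ Summable (fun n : ℕ => (q (n + 1) - c (n + 1)) * a (n + 1)) ∧
      ¬ Summable (fun n : ℕ => q (n + 1) * a (n + 1)) :=
  kummer_mul_divergence_aux_general a c ha hc q hq N h hqdiv
end

section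
/- Let (a_n)_{n≥1} and (c_n)_{n≥1} be sequences of positive real numbers. Suppose there exist a sequence (q_n)_{n≥1} of positive real numbers and a positive integer N such that q_n · (a_n / a_{n+1}) − q_{n+1} ≤ −c_{n+1} for all n ≥ N, the series ∑ 1/q_n diverges, and in addition the series ∑ c_n/q_n diverges. Then the series ∑ c_n a_n diverges. -/
/-!
Multiplying the Kummer condition by `a (n + 1) > 0` gives
`q n * a n + c (n + 1) * a (n + 1) ≤ q (n + 1) * a (n + 1)`, so `q n * a n` is nondecreasing
from `N` on and stays above `K = q N * a N > 0`. Hence `c n / q n ≤ c n * a n / K` eventually,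
and summability of `∑ c n * a n` would force summability of `∑ c n / q n`.
-/

open Filter

lemma mul_le_mul_of_kummer_ineq {a a' q q' c : ℝ} (ha' : 0 < a') (hc : 0 ≤ c)
    (h : q * (a / a') - q' ≤ -c) : q * a ≤ q' * a' := by
  have hscaled : (q * (a / a') - q') * a' ≤ -c * a' := mul_le_mul_of_nonneg_right h ha'.le
  rw [sub_mul, mul_assoc, div_mul_cancel₀ a ha'.ne'] at hscaled
  linarith [mul_nonneg hc ha'.le]

lemma Summable.div_of_summable_mul {a c q : ℕ → ℝ} {K : ℝ} (hK : 0 < K)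
    (hs : Summable (fun n => c n * a n))
    (hbound : ∀ᶠ n in atTop, 0 ≤ c n ∧ 0 < q n ∧ K ≤ q n * a n) :
    Summable (fun n => c n / q n) := by
  refine (hs.mul_left K⁻¹).of_norm_bounded_eventually_nat ?_
  filter_upwards [hbound] with n ⟨hc, hq, hqa⟩
  rw [Real.norm_of_nonneg (div_nonneg hc hq.le), inv_mul_eq_div, div_le_div_iff₀ hq hK,
    mul_assoc, mul_comm (a n)]
  exact mul_le_mul_of_nonneg_left hqa hc

theorem kummer_mul_divergence_general (a c : ℕ → ℝ) (ha : ∀ n, 1 ≤ n → 0 < a n)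
    (hc : ∀ n, 1 ≤ n → 0 < c n) (q : ℕ → ℝ) (hq : ∀ n, 1 ≤ n → 0 < q n)
    (N : ℕ) (hN : 1 ≤ N)
    (h : ∀ n, N ≤ n → q n * (a n / a (n + 1)) - q (n + 1) ≤ -c (n + 1))
    (hcqdiv : ¬ Summable (fun n : ℕ => c (n + 1) / q (n + 1))) :
    ¬ Summable (fun n : ℕ => c (n + 1) * a (n + 1)) := by
  intro hs
  have hmono : MonotoneOn (fun n => q n * a n) {n | N ≤ n} :=
    monotoneOn_nat_Ici_of_le_succ fun n hn =>
      mul_le_mul_of_kummer_ineq (ha _ (by omega)) (hc _ (by omega)).le (h n hn)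
  refine hcqdiv (Summable.div_of_summable_mul (mul_pos (hq N hN) (ha N hN)) hs ?_)
  filter_upwards [eventually_ge_atTop N] with n hn
  exact ⟨(hc _ (by omega)).le, hq _ (by omega),
    hmono (le_refl N) (by omega : N ≤ n + 1) (by omega)⟩

/-- Extended Kummer divergence test for series `∑ c_n a_n`. -/
theorem kummer_mul_divergence (a c : ℕ → ℝ) (ha : ∀ n, 1 ≤ n → 0 < a n)
    (hc : ∀ n, 1 ≤ n → 0 < c n) (q : ℕ → ℝ) (hq : ∀ n, 1 ≤ n → 0 < q n)
    (N : ℕ) (hN : 1 ≤ N)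
    (h : ∀ n, N ≤ n → q n * (a n / a (n + 1)) - q (n + 1) ≤ -c (n + 1))
    (hqdiv : ¬ Summable (fun n : ℕ => 1 / q (n + 1)))
    (hcqdiv : ¬ Summable (fun n : ℕ => c (n + 1) / q (n + 1))) :
    ¬ Summable (fun n : ℕ => c (n + 1) * a (n + 1)) :=
  kummer_mul_divergence_general a c ha hc q hq N hN h hcqdiv
end

section
/- Let (a_n)_{n≥1} and (c_n)_{n≥1} be sequences of positive real numbers. Suppose that both series ∑ c_n a_n and ∑ a_n diverge, and suppose that for every positive integer m there exists an integer r ≥ m such that a_m + ⋯ + a_r ≥ c_m a_m + ⋯ + c_r a_r. Then there exists a sequence (q_n)_{n≥1} of positive real numbers, namely q_n = (c_1 a_1 + ⋯ + c_n a_n)/a_n, such that the series ∑ 1/q_n diverges and q_n · (a_n / a_{n+1}) − q_{n+1} ≤ −c_{n+1} for all n ≥ 1. -/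
/-!
Write `S n = c 1 * a 1 + ⋯ + c n * a n`, so `q n = S n / a n`. The recurrence holds with equality:
`q n * (a n / a (n + 1)) - q (n + 1) = (S n - S (n + 1)) / a (n + 1) = -c (n + 1)`.

For the divergence of `∑ 1 / q n = ∑ a n / S n`: `S n → ∞` because `∑ c n a n` diverges, and
concatenating the blocks given by hypothesis, every `N` admits an `r` with `S r ≥ 2 S N` and
`∑_{N < i ≤ r} c i a i ≤ ∑_{N < i ≤ r} a i`. As `S` is increasing,
`∑_{N < i ≤ r} a i / S i ≥ (∑_{N < i ≤ r} a i) / S r ≥ (S r - S N) / S r ≥ 1 / 2`,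
so the partial sums of `∑ a n / S n` are not Cauchy.
-/

open Filter Finset

theorem Finset.sum_Ico_add_one_eq_sum_Ioc {M : Type*} [AddCommMonoid M] (f : ℕ → M) (m n : ℕ) :
    ∑ i ∈ Ico m n, f (i + 1) = ∑ i ∈ Ioc m n, f i := by
  rw [sum_Ico_add', Ico_add_one_add_one_eq_Ioc]

theorem exists_ge_sum_Ioc_le_of_forall_exists {M : Type*} [AddCommMonoid M] [PartialOrder M]
    [IsOrderedAddMonoid M] {f g : ℕ → M}
    (h : ∀ m, ∃ r, m < r ∧ ∑ i ∈ Ioc m r, f i ≤ ∑ i ∈ Ioc m r, g i) (m K : ℕ) :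
    ∃ r, K ≤ r ∧ m ≤ r ∧ ∑ i ∈ Ioc m r, f i ≤ ∑ i ∈ Ioc m r, g i := by
  induction K with
  | zero =>
    obtain ⟨r, hmr, hr⟩ := h m
    exact ⟨r, r.zero_le, hmr.le, hr⟩
  | succ K ih =>
    obtain ⟨r, hKr, hmr, hr⟩ := ih
    obtain ⟨r', hrr', hr'⟩ := h r
    refine ⟨r', by omega, by omega, ?_⟩
    rw [← sum_Ioc_consecutive f hmr hrr'.le, ← sum_Ioc_consecutive g hmr hrr'.le]
    exact add_le_add hr hr'

theorem not_summable_of_forall_exists_le_sum_Ioc {f : ℕ → ℝ} {ε : ℝ} (hε : 0 < ε)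
    (h : ∀ N, ∃ r, N ≤ r ∧ ε ≤ ∑ i ∈ Ioc N r, f i) : ¬ Summable fun n => f (n + 1) := by
  intro hf
  obtain ⟨N, hN⟩ := Metric.cauchySeq_iff'.1 hf.hasSum.tendsto_sum_nat.cauchySeq ε hε
  obtain ⟨r, hNr, hr⟩ := h N
  have hdist := hN r hNr
  rw [Real.dist_eq, ← sum_Ico_eq_sub _ hNr, sum_Ico_add_one_eq_sum_Ioc] at hdist
  exact (hr.trans (le_abs_self _)).not_gt hdist

theorem not_summable_div_sum_Ioc {b d : ℕ → ℝ} (hb : ∀ n, 0 < n → 0 ≤ b n)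
    (hd : ∀ n, 0 < n → 0 < d n) (hdiv : ¬ Summable fun n => d (n + 1))
    (hblock : ∀ m, ∃ r, m < r ∧ ∑ i ∈ Ioc m r, d i ≤ ∑ i ∈ Ioc m r, b i) :
    ¬ Summable fun n => b (n + 1) / ∑ i ∈ Ioc 0 (n + 1), d i := by
  set S : ℕ → ℝ := fun n => ∑ i ∈ Ioc 0 n, d i
  have hS_nonneg : ∀ n, 0 ≤ S n := fun n =>
    sum_nonneg fun i hi => (hd i (mem_Ioc.1 hi).1).le
  have hS_pos : ∀ n, 0 < n → 0 < S n := fun n hn =>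
    sum_pos (fun i hi => hd i (mem_Ioc.1 hi).1) ⟨n, mem_Ioc.2 ⟨hn, le_rfl⟩⟩
  have hS_mono : Monotone S := fun m n hmn =>
    sum_le_sum_of_subset_of_nonneg (Ioc_subset_Ioc_right hmn) fun i hi _ =>
      (hd i (mem_Ioc.1 hi).1).le
  have hS_tendsto : Tendsto S atTop atTop := by
    have := (not_summable_iff_tendsto_nat_atTop_of_nonneg fun n => (hd (n + 1) n.succ_pos).le).1
      hdiv
    simpa only [range_eq_Ico, sum_Ico_add_one_eq_sum_Ioc] using this
  refine not_summable_of_forall_exists_le_sum_Ioc (f := fun n => b n / S n) one_half_pos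
    fun N => ?_
  obtain ⟨K, hK⟩ := eventually_atTop.1 (hS_tendsto.eventually_ge_atTop (2 * S N))
  obtain ⟨r, hKNr, hNr, hr⟩ := exists_ge_sum_Ioc_le_of_forall_exists hblock N (max K (N + 1))
  obtain ⟨hKr, hNr'⟩ := max_le_iff.1 hKNr
  have hSr : 0 < S r := hS_pos r (by omega)
  have hSNr : 2 * S N ≤ S r := hK r hKr
  refine ⟨r, hNr, ?_⟩
  calc 1 / 2 ≤ (S r - S N) / S r := by
        rw [le_div_iff₀ hSr]
        linarith [hS_nonneg N]
    _ = (∑ i ∈ Ioc N r, d i) / S r := by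
        rw [← eq_sub_of_add_eq' (sum_Ioc_consecutive d N.zero_le hNr)]
    _ ≤ (∑ i ∈ Ioc N r, b i) / S r := by gcongr
    _ = ∑ i ∈ Ioc N r, b i / S r := sum_div ..
    _ ≤ ∑ i ∈ Ioc N r, b i / S i := by
        refine sum_le_sum fun i hi => ?_
        obtain ⟨hNi, hir⟩ := mem_Ioc.1 hi
        exact div_le_div_of_nonneg_left (hb i (by omega)) (hS_pos i (by omega)) (hS_mono hir)

theorem kummer_mul_divergence_converse_general (a c : ℕ → ℝ) (ha : ∀ n, 1 ≤ n → 0 < a n)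
    (hc : ∀ n, 1 ≤ n → 0 < c n)
    (hcadiv : ¬ Summable (fun n : ℕ => c (n + 1) * a (n + 1)))
    (hblock : ∀ m : ℕ, 1 ≤ m → ∃ r : ℕ, m ≤ r ∧
      (∑ i ∈ Finset.Icc m r, a i) ≥ (∑ i ∈ Finset.Icc m r, c i * a i)) :
    ∃ q : ℕ → ℝ, q = (fun n : ℕ => (∑ i ∈ Finset.Icc 1 n, c i * a i) / a n) ∧
      (∀ n, 1 ≤ n → 0 < q n) ∧
      ¬ Summable (fun n : ℕ => 1 / q (n + 1)) ∧
      (∀ n, 1 ≤ n → q n * (a n / a (n + 1)) - q (n + 1) ≤ -c (n + 1)) := by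
  have hca : ∀ n, 1 ≤ n → 0 < c n * a n := fun n hn => mul_pos (hc n hn) (ha n hn)
  have hIcc : ∀ m n, Icc (m + 1) n = Ioc m n := Icc_add_one_left_eq_Ioc
  have hIcc_one : ∀ n, Icc 1 n = Ioc 0 n := hIcc 0
  refine ⟨_, rfl, fun n hn => div_pos ?_ (ha n hn), ?_, fun n hn => le_of_eq ?_⟩
  · exact sum_pos (fun i hi => hca i (mem_Icc.1 hi).1) ⟨n, mem_Icc.2 ⟨hn, le_rfl⟩⟩
  · simp only [one_div_div, hIcc_one]
    refine not_summable_div_sum_Ioc (fun n hn => (ha n hn).le) hca hcadiv fun m => ?_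
    obtain ⟨r, hmr, hr⟩ := hblock (m + 1) m.succ_pos
    exact ⟨r, hmr, by rwa [← hIcc]⟩
  · have han : a n ≠ 0 := (ha n hn).ne'
    have han' : a (n + 1) ≠ 0 := (ha (n + 1) n.succ_pos).ne'
    rw [sum_Icc_succ_top (by omega)]
    field_simp
    ring

/-- Converse of the extended Kummer divergence test for series `∑ c_n a_n`:
one may take `q n = (c 1 * a 1 + ⋯ + c n * a n) / a n`. -/
theorem kummer_mul_divergence_converse (a c : ℕ → ℝ) (ha : ∀ n, 1 ≤ n → 0 < a n)
    (hc : ∀ n, 1 ≤ n → 0 < c n)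
    (hcadiv : ¬ Summable (fun n : ℕ => c (n + 1) * a (n + 1)))
    (hadiv : ¬ Summable (fun n : ℕ => a (n + 1)))
    (hblock : ∀ m : ℕ, 1 ≤ m → ∃ r : ℕ, m ≤ r ∧
      (∑ i ∈ Finset.Icc m r, a i) ≥ (∑ i ∈ Finset.Icc m r, c i * a i)) :
    ∃ q : ℕ → ℝ, q = (fun n : ℕ => (∑ i ∈ Finset.Icc 1 n, c i * a i) / a n) ∧
      (∀ n, 1 ≤ n → 0 < q n) ∧
      ¬ Summable (fun n : ℕ => 1 / q (n + 1)) ∧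
      (∀ n, 1 ≤ n → q n * (a n / a (n + 1)) - q (n + 1) ≤ -c (n + 1)) :=
  kummer_mul_divergence_converse_general a c ha hc hcadiv hblock
end

section
/- Let (a_n)_{n≥1} and (c_n)_{n≥1} be sequences of positive real numbers, and define R_n^- = n·(a_n/a_{n+1}) − (n+1) − c_{n+1}. If liminf_{n→∞} R_n^- > 0, then the series ∑ c_n a_n converges. -/
/-!
Eventually the Raabe quantity is positive, which after multiplying by `a (n + 1) > 0` reads
`c (n + 1) * a (n + 1) ≤ n * a n - (n + 1) * a (n + 1)`. The terms are thus dominated by the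
decrements of the nonnegative sequence `n * a n`, so the partial sums telescope to a bounded
quantity.
-/

open Filter

theorem summable_of_le_sub_succ_s11 {b u : ℕ → ℝ} (hb : ∀ n, 0 ≤ b n) (hu : ∀ n, 0 ≤ u n)
    (h : ∀ n, b n ≤ u n - u (n + 1)) : Summable b := by
  refine summable_of_sum_range_le hb (c := u 0) fun n => ?_
  calc ∑ i ∈ Finset.range n, b i
      ≤ ∑ i ∈ Finset.range n, (u i - u (i + 1)) := Finset.sum_le_sum fun i _ => h i
    _ = u 0 - u n := Finset.sum_range_sub' u n
    _ ≤ u 0 := sub_le_self _ (hu n)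

theorem summable_of_eventually_le_sub_succ {b u : ℕ → ℝ} (hb : ∀ᶠ n in atTop, 0 ≤ b n)
    (hu : ∀ᶠ n in atTop, 0 ≤ u n) (h : ∀ᶠ n in atTop, b n ≤ u n - u (n + 1)) :
    Summable b := by
  obtain ⟨N, hN⟩ := eventually_atTop.mp (hb.and (hu.and h))
  refine (summable_nat_add_iff N).mp (summable_of_le_sub_succ_s11 (u := fun n => u (n + N))
    (fun n => (hN _ (Nat.le_add_left N n)).1) (fun n => (hN _ (Nat.le_add_left N n)).2.1)
    fun n => ?_)
  simpa only [Nat.add_right_comm n 1 N] using (hN _ (Nat.le_add_left N n)).2.2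

theorem mul_le_sub_of_raabe_pos {n a₀ a₁ c₁ : ℝ} (ha₁ : 0 < a₁)
    (hR : 0 < n * (a₀ / a₁) - (n + 1) - c₁) : c₁ * a₁ ≤ n * a₀ - (n + 1) * a₁ := by
  have h := mul_pos hR ha₁
  have expand : (n * (a₀ / a₁) - (n + 1) - c₁) * a₁ = n * a₀ - (n + 1) * a₁ - c₁ * a₁ := by
    field_simp
  linarith

/-- Generalized Raabe test, convergence part. -/
theorem raabe_mul_convergence (a c : ℕ → ℝ) (ha : ∀ n, 1 ≤ n → 0 < a n)
    (hc : ∀ n, 1 ≤ n → 0 < c n)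
    (h : 0 < liminf (fun n : ℕ =>
        (((n : ℝ) * (a n / a (n + 1)) - (n + 1) - c (n + 1) : ℝ) : EReal)) atTop) :
    Summable (fun n : ℕ => c (n + 1) * a (n + 1)) := by
  have hR : ∀ᶠ n : ℕ in atTop, 0 < (n : ℝ) * (a n / a (n + 1)) - (n + 1) - c (n + 1) :=
    (eventually_lt_of_lt_liminf h).mono fun n hn => EReal.coe_pos.mp hn
  refine summable_of_eventually_le_sub_succ (u := fun n => n * a n)
    (Eventually.of_forall fun n => (mul_pos (hc _ n.succ_pos) (ha _ n.succ_pos)).le)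
    ((eventually_ge_atTop 1).mono fun n hn => mul_nonneg n.cast_nonneg (ha n hn).le)
    (hR.mono fun n hn => ?_)
  simpa only [Nat.cast_succ] using mul_le_sub_of_raabe_pos (ha _ n.succ_pos) hn
end

section
/- Let (a_n)_{n≥1} and (c_n)_{n≥1} be sequences of positive real numbers, and define R_n^+ = n·(a_n/a_{n+1}) − (n+1) + c_{n+1}. If limsup_{n→∞} R_n^+ < 0 and the series ∑ c_n/n diverges, then the series ∑ c_n a_n diverges. -/
/-!
Eventually `R⁺ₙ < 0`, which after multiplying by `aₙ₊₁ > 0` reads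
`n aₙ + cₙ₊₁ aₙ₊₁ < (n + 1) aₙ₊₁`; since `cₙ₊₁ aₙ₊₁ > 0`, the sequence `n aₙ` is eventually
increasing, hence bounded below by some `C > 0`. Then `cₙ / n ≤ C⁻¹ cₙ aₙ`, and summability of
`∑ cₙ aₙ` would force summability of `∑ cₙ / n`.
-/

open Filter

lemma mul_le_succ_mul_of_raabe_neg {a c : ℕ → ℝ} {n : ℕ} (ha : 0 < a (n + 1))
    (hc : 0 ≤ c (n + 1)) (h : n * (a n / a (n + 1)) - (n + 1) + c (n + 1) < 0) :
    n * a n ≤ (n + 1) * a (n + 1) := by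
  have hR : n * a n + c (n + 1) * a (n + 1) < (n + 1) * a (n + 1) := by
    have := mul_lt_mul_of_pos_right h ha
    field_simp at this
    linarith
  nlinarith [mul_nonneg hc ha.le]

lemma exists_pos_eventually_le_of_eventually_le_succ {b : ℕ → ℝ}
    (hpos : ∀ᶠ n in atTop, 0 < b n) (hmono : ∀ᶠ n in atTop, b n ≤ b (n + 1)) :
    ∃ C > 0, ∀ᶠ n in atTop, C ≤ b n := by
  obtain ⟨N, hN⟩ := eventually_atTop.mp (hpos.and hmono)
  refine ⟨b N, (hN N le_rfl).1, eventually_atTop.mpr ⟨N, fun n hn => ?_⟩⟩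
  induction n, hn using Nat.le_induction with
  | base => exact le_rfl
  | succ n hn ih => exact ih.trans (hN n hn).2

lemma Summable.div_of_le_mul {a c d : ℕ → ℝ} {C : ℝ} (hC : 0 < C) (hc : ∀ᶠ n in atTop, 0 ≤ c n)
    (hd : ∀ᶠ n in atTop, 0 < d n) (hbound : ∀ᶠ n in atTop, C ≤ d n * a n)
    (hs : Summable fun n => c n * a n) : Summable fun n => c n / d n := by
  refine (hs.mul_left C⁻¹).of_norm_bounded_eventually_nat ?_
  filter_upwards [hc, hd, hbound] with n hcn hdn hn
  rw [Real.norm_of_nonneg (div_nonneg hcn hdn.le), div_le_iff₀ hdn]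
  calc c n = C⁻¹ * c n * C := by field_simp
    _ ≤ C⁻¹ * c n * (d n * a n) := by gcongr
    _ = C⁻¹ * (c n * a n) * d n := by ring

/-- Generalized Raabe test, divergence part. -/
theorem raabe_mul_divergence (a c : ℕ → ℝ) (ha : ∀ n, 1 ≤ n → 0 < a n)
    (hc : ∀ n, 1 ≤ n → 0 < c n)
    (h : limsup (fun n : ℕ =>
        (((n : ℝ) * (a n / a (n + 1)) - (n + 1) + c (n + 1) : ℝ) : EReal)) atTop < 0)
    (hcn : ¬ Summable (fun n : ℕ => c (n + 1) / (n + 1 : ℝ))) :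
    ¬ Summable (fun n : ℕ => c (n + 1) * a (n + 1)) := by
  have hpos : ∀ᶠ n : ℕ in atTop, 0 < (n : ℝ) * a n := by
    filter_upwards [eventually_ge_atTop 1] with n hn
    exact mul_pos (by exact_mod_cast hn) (ha n hn)
  have hmono : ∀ᶠ n : ℕ in atTop, (n : ℝ) * a n ≤ (n + 1) * a (n + 1) := by
    filter_upwards [eventually_lt_of_limsup_lt h] with n hn
    exact mul_le_succ_mul_of_raabe_neg (ha _ (Nat.le_add_left 1 n)) (hc _ (Nat.le_add_left 1 n)).le
      (by exact_mod_cast hn)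
  obtain ⟨C, hC, hCb⟩ :=
    exists_pos_eventually_le_of_eventually_le_succ hpos (by simpa using hmono)
  have hbound : ∀ᶠ n : ℕ in atTop, C ≤ ((n : ℝ) + 1) * a (n + 1) := by
    simpa using (tendsto_add_atTop_nat 1).eventually hCb
  exact fun hs => hcn <| hs.div_of_le_mul hC (.of_forall fun n => (hc _ (Nat.le_add_left 1 n)).le)
    (.of_forall fun n => n.cast_add_one_pos) hbound
end

section
/- Let (a_n)_{n≥1} and (c_n)_{n≥1} be sequences of positive real numbers, let γ ≥ 1 be a real number, and let (θ_n) be a bounded sequence of real numbers. Suppose there exists μ ∈ ℝ such that θ_n ≤ (1 − μ)·n^{γ−1} for all sufficiently large n, suppose the series ∑ c_n/n diverges, and suppose a_n/a_{n+1} ≤ 1 − c_{n+1}/n + μ/n + θ_n/n^{γ} for all sufficiently large n. Then the series ∑ c_n a_n diverges. -/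
/-!
Absorbing the `θ`-term into `μ / n` turns the hypothesis into
`a n / a (n + 1) ≤ (n + 1 - c (n + 1)) / n ≤ (n + 1) / n`, so `n * a n` is eventually
nondecreasing, hence bounded below by some `K > 0`. Then `c n / n ≤ K⁻¹ * (c n * a n)` eventually,
and summability of `∑ c n * a n` would force summability of `∑ c n / n`.
-/

open Filter

lemma div_rpow_le_div_of_le_mul_rpow_sub_one {x t b γ : ℝ} (hx : 0 < x)
    (h : t ≤ b * x ^ (γ - 1)) : t / x ^ γ ≤ b / x := by
  calc t / x ^ γ ≤ b * x ^ (γ - 1) / x ^ γ := by gcongr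
    _ = b / x := by rw [Real.rpow_sub hx, Real.rpow_one]; field_simp

lemma le_succ_div_of_le_gauss_bound {x r c μ θ γ : ℝ} (hx : 0 < x) (hc : 0 ≤ c)
    (hθ : θ ≤ (1 - μ) * x ^ (γ - 1)) (hr : r ≤ 1 - c / x + μ / x + θ / x ^ γ) :
    r ≤ (x + 1) / x :=
  calc r ≤ 1 - c / x + μ / x + (1 - μ) / x :=
        hr.trans (add_le_add_right (div_rpow_le_div_of_le_mul_rpow_sub_one hx hθ) _)
    _ = (x + 1 - c) / x := by field_simp; ring
    _ ≤ (x + 1) / x := by gcongr; linarith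

lemma mul_le_succ_mul_of_div_le {x p q : ℝ} (hx : 0 < x) (hq : 0 < q)
    (h : p / q ≤ (x + 1) / x) : x * p ≤ (x + 1) * q := by
  rw [div_le_div_iff₀ hq hx] at h
  linarith

lemma exists_pos_le_natCast_mul_of_le_succ {a : ℕ → ℝ} (ha : ∀ᶠ n in atTop, 0 < a n)
    (h : ∀ᶠ n : ℕ in atTop, (n : ℝ) * a n ≤ (n + 1) * a (n + 1)) :
    ∃ K, 0 < K ∧ ∀ᶠ n : ℕ in atTop, K ≤ n * a n := by
  obtain ⟨N, hN⟩ := eventually_atTop.1 (ha.and (h.and (eventually_ge_atTop 1)))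
  have hmono : MonotoneOn (fun n : ℕ => (n : ℝ) * a n) (Set.Ici N) :=
    monotoneOn_nat_Ici_of_le_succ fun n hn => by exact_mod_cast (hN n hn).2.1
  refine ⟨N * a N, mul_pos (by exact_mod_cast (hN N le_rfl).2.2) (hN N le_rfl).1, ?_⟩
  filter_upwards [eventually_ge_atTop N] with n hn
  exact hmono Set.self_mem_Ici hn hn

lemma summable_div_succ_of_summable_mul {a c : ℕ → ℝ} {K : ℝ} (hK : 0 < K)
    (hc : ∀ n, 0 ≤ c n) (ha : ∀ᶠ n : ℕ in atTop, K ≤ (n + 1) * a n)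
    (hs : Summable fun n => c n * a n) : Summable fun n => c n / (n + 1) := by
  refine Summable.of_norm_bounded_eventually_nat (hs.mul_left K⁻¹) ?_
  filter_upwards [ha] with n hn
  have hKa : K / (n + 1) ≤ a n := by rw [div_le_iff₀ (by positivity)]; linarith
  rw [Real.norm_of_nonneg (div_nonneg (hc n) (by positivity))]
  calc c n / (n + 1) = K⁻¹ * (c n * (K / (n + 1))) := by field_simp
    _ ≤ K⁻¹ * (c n * a n) := by gcongr; exact hc n

theorem gauss_mul_divergence_general (a c : ℕ → ℝ) (ha : ∀ n, 1 ≤ n → 0 < a n)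
    (hc : ∀ n, 1 ≤ n → 0 < c n) (γ : ℝ)
    (θ : ℕ → ℝ)
    (h : ∃ μ : ℝ,
      (∃ N : ℕ, ∀ n, N ≤ n → θ n ≤ (1 - μ) * (n : ℝ) ^ (γ - 1)) ∧
      (∃ N : ℕ, ∀ n, N ≤ n → a n / a (n + 1) ≤
        1 - c (n + 1) / (n : ℝ) + μ / (n : ℝ) + θ n / (n : ℝ) ^ γ))
    (hcdiv : ¬ Summable (fun n : ℕ => c (n + 1) / (n + 1 : ℝ))) :
    ¬ Summable (fun n : ℕ => c (n + 1) * a (n + 1)) := by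
  obtain ⟨μ, hθ, hratio⟩ := h
  have ha' : ∀ᶠ n in atTop, 0 < a n := eventually_atTop.2 ⟨1, ha⟩
  have hstep : ∀ᶠ n : ℕ in atTop, (n : ℝ) * a n ≤ (n + 1) * a (n + 1) := by
    filter_upwards [eventually_atTop.2 hθ, eventually_atTop.2 hratio, eventually_ge_atTop 1]
      with n hθn hrn hn
    have hx : (0 : ℝ) < n := by exact_mod_cast hn
    exact mul_le_succ_mul_of_div_le hx (ha _ (by omega))
      (le_succ_div_of_le_gauss_bound hx (hc _ (by omega)).le hθn hrn)
  obtain ⟨K, hK, hKa⟩ := exists_pos_le_natCast_mul_of_le_succ ha' hstep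
  have hKa' : ∀ᶠ n : ℕ in atTop, K ≤ (n + 1) * a (n + 1) :=
    (tendsto_add_atTop_nat 1).eventually hKa |>.mono fun n hn => by exact_mod_cast hn
  exact fun hs => hcdiv <|
    summable_div_succ_of_summable_mul hK (fun n => (hc _ n.succ_pos).le) hKa' hs

/-- Generalized Gauss test, divergence part. -/
theorem gauss_mul_divergence (a c : ℕ → ℝ) (ha : ∀ n, 1 ≤ n → 0 < a n)
    (hc : ∀ n, 1 ≤ n → 0 < c n) (γ : ℝ) (hγ : 1 ≤ γ)
    (θ : ℕ → ℝ) (hθbdd : ∃ M : ℝ, ∀ n, |θ n| ≤ M)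
    (h : ∃ μ : ℝ,
      (∃ N : ℕ, ∀ n, N ≤ n → θ n ≤ (1 - μ) * (n : ℝ) ^ (γ - 1)) ∧
      (∃ N : ℕ, ∀ n, N ≤ n → a n / a (n + 1) ≤
        1 - c (n + 1) / (n : ℝ) + μ / (n : ℝ) + θ n / (n : ℝ) ^ γ))
    (hcdiv : ¬ Summable (fun n : ℕ => c (n + 1) / (n + 1 : ℝ))) :
    ¬ Summable (fun n : ℕ => c (n + 1) * a (n + 1)) :=
  gauss_mul_divergence_general a c ha hc γ θ h hcdiv
end

section
/- Let (a_n)_{n≥1} be a sequence of positive real numbers and let (q_n)_{n≥1} be a sequence of positive real numbers such that q_n·(n+1)/n − q_{n+1} ≥ (n+1)·a_{n+1} for all sufficiently large n and such that lim_{n→∞} (q_n·(n+1)/n − q_{n+1}) = 0. Then lim_{n→∞} n·a_n = 0. -/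
open Filter

theorem olivier_no_monotone_general (a q : ℕ → ℝ) (ha : ∀ n, 1 ≤ n → 0 < a n)
    (h : ∃ N : ℕ, ∀ n, N ≤ n →
      q n * ((n + 1 : ℝ) / n) - q (n + 1) ≥ (n + 1 : ℝ) * a (n + 1))
    (hlim : Tendsto (fun n : ℕ => q n * ((n + 1 : ℝ) / n) - q (n + 1)) atTop (nhds 0)) :
    Tendsto (fun n : ℕ => (n : ℝ) * a n) atTop (nhds 0) := by
  obtain ⟨N, hN⟩ := h
  rw [← tendsto_add_atTop_iff_nat 1]
  refine squeeze_zero' (Eventually.of_forall fun n => ?_) ?_ hlim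
  · exact mul_nonneg (by positivity) (ha (n + 1) n.succ_pos).le
  · filter_upwards [eventually_ge_atTop N] with n hn
    push_cast
    exact hN n hn

/-- Olivier's theorem without monotonicity, via the auxiliary sequence `q`. -/
theorem olivier_no_monotone (a q : ℕ → ℝ) (ha : ∀ n, 1 ≤ n → 0 < a n)
    (hq : ∀ n, 1 ≤ n → 0 < q n)
    (h : ∃ N : ℕ, ∀ n, N ≤ n →
      q n * ((n + 1 : ℝ) / n) - q (n + 1) ≥ (n + 1 : ℝ) * a (n + 1))
    (hlim : Tendsto (fun n : ℕ => q n * ((n + 1 : ℝ) / n) - q (n + 1)) atTop (nhds 0)) :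
    Tendsto (fun n : ℕ => (n : ℝ) * a n) atTop (nhds 0) :=
  olivier_no_monotone_general a q ha h hlim
end
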